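/- arXiv:2405.18806 — 2 statements merged into one kernel-verified Lean document; each statement's English description precedes it below -/
import Mathlib

section
/- For every z ∈ ℂ \ [0,9], the lattice Green's function G_z decays exponentially: there exist constants C > 0 and c > 0 such that |G_z(x)| ≤ C e^{−c(|x₁| + |x₂|)} for all x = (x₁,x₂) ∈ ℤ². -/
open MeasureTheory

/-- The symbol `σ(ξ; z) = z − 6 + 2 cos ξ₁ + 2 cos ξ₂ + 2 cos(ξ₁ − ξ₂)`. -/
noncomputable def latticeSymbol (ξ : ℝ × ℝ) (z : ℂ) : ℂ :=
  z - 6 + ((2 * Real.cos ξ.1 + 2 * Real.cos ξ.2 + 2 * Real.cos (ξ.1 - ξ.2) : ℝ) : ℂ)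

/-- The lattice Green's function for `z ∉ [0,9]`. -/
noncomputable def latticeGreen (z : ℂ) (x : ℤ × ℤ) : ℂ :=
  (1 / (4 * (Real.pi : ℂ) ^ 2)) *
    ∫ ξ in Set.Icc (-Real.pi) Real.pi ×ˢ Set.Icc (-Real.pi) Real.pi,
      Complex.exp (Complex.I * ((x.1 : ℂ) * (ξ.1 : ℂ) + (x.2 : ℂ) * (ξ.2 : ℂ))) /
        latticeSymbol ξ z

section Aux
open Complex Set Interval

lemma norm_cos_shift (a b : ℝ) :
    ‖Complex.cos (a + b * I) - Complex.cos a‖ ≤ Real.exp |b| - 1 := by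
  rw [Complex.cos_add, Complex.cos_mul_I, Complex.sin_mul_I]
  have h1 : Complex.cos a * Complex.cosh b - Complex.sin a * (Complex.sinh b * I)
      - Complex.cos a = Complex.cos a * (Complex.cosh b - 1)
      - (Complex.sin a * Complex.sinh b) * I := by ring
  rw [h1]
  have hc : Complex.cos (a:ℂ) = ((Real.cos a : ℝ) : ℂ) := (Complex.ofReal_cos a).symm
  have hs : Complex.sin (a:ℂ) = ((Real.sin a : ℝ) : ℂ) := (Complex.ofReal_sin a).symm
  have hch : Complex.cosh (b:ℂ) = ((Real.cosh b : ℝ) : ℂ) := (Complex.ofReal_cosh b).symm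
  have hsh : Complex.sinh (b:ℂ) = ((Real.sinh b : ℝ) : ℂ) := (Complex.ofReal_sinh b).symm
  rw [hc, hs, hch, hsh]
  have := norm_sub_le (((Real.cos a : ℝ) : ℂ) * (((Real.cosh b : ℝ) : ℂ) - 1))
    ((((Real.sin a : ℝ) : ℂ) * ((Real.sinh b : ℝ) : ℂ)) * I)
  refine this.trans ?_
  have e1 : ‖((Real.cos a : ℝ) : ℂ) * (((Real.cosh b : ℝ) : ℂ) - 1)‖
      = |Real.cos a| * |Real.cosh b - 1| := by
    rw [norm_mul, show ((Real.cosh b : ℝ) : ℂ) - 1 = ((Real.cosh b - 1 : ℝ) : ℂ) by push_cast; ring,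
      Complex.norm_real, Complex.norm_real, Real.norm_eq_abs, Real.norm_eq_abs]
  have e2 : ‖(((Real.sin a : ℝ) : ℂ) * ((Real.sinh b : ℝ) : ℂ)) * I‖
      = |Real.sin a| * |Real.sinh b| := by
    rw [norm_mul, norm_mul, Complex.norm_I, mul_one, Complex.norm_real, Complex.norm_real,
      Real.norm_eq_abs, Real.norm_eq_abs]
  rw [e1, e2]
  have hcosh : |Real.cosh b - 1| = Real.cosh |b| - 1 := by
    rw [_root_.abs_of_nonneg (by linarith [Real.one_le_cosh b]), Real.cosh_abs]
  have hsinh : |Real.sinh b| = Real.sinh |b| := by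
    rw [Real.abs_sinh]
  have key : Real.cosh |b| - 1 + Real.sinh |b| = Real.exp |b| - 1 := by
    have := Real.cosh_add_sinh |b|; linarith
  have h2 : |Real.cos a| * |Real.cosh b - 1| ≤ Real.cosh |b| - 1 := by
    rw [hcosh]
    calc |Real.cos a| * (Real.cosh |b| - 1) ≤ 1 * (Real.cosh |b| - 1) := by
          apply mul_le_mul_of_nonneg_right (Real.abs_cos_le_one a)
          linarith [Real.one_le_cosh |b|]
      _ = _ := one_mul _
  have h3 : |Real.sin a| * |Real.sinh b| ≤ Real.sinh |b| := by
    rw [hsinh]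
    calc |Real.sin a| * Real.sinh |b| ≤ 1 * Real.sinh |b| := by
          apply mul_le_mul_of_nonneg_right (Real.abs_sin_le_one a)
          exact Real.sinh_nonneg_iff.mpr (abs_nonneg b)
      _ = _ := one_mul _
  linarith

/-- Complexified symbol. -/
noncomputable def cS (z : ℂ) (w₁ w₂ : ℂ) : ℂ :=
  z - 6 + (2 * Complex.cos w₁ + 2 * Complex.cos w₂ + 2 * Complex.cos (w₁ - w₂))

lemma cS_real (z : ℂ) (a b : ℝ) : cS z a b = latticeSymbol (a, b) z := by
  unfold cS latticeSymbol
  push_cast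
  simp [Complex.ofReal_cos, Complex.ofReal_sub]

lemma f_mem (a b : ℝ) :
    6 - (2 * Real.cos a + 2 * Real.cos b + 2 * Real.cos (a - b)) ∈ Set.Icc (0:ℝ) 9 := by
  have hab := Real.cos_sub a b
  have h1 := Real.sin_sq_add_cos_sq a
  have h2 := Real.sin_sq_add_cos_sq b
  constructor
  · nlinarith [Real.cos_le_one a, Real.cos_le_one b, Real.cos_le_one (a - b)]
  · nlinarith [sq_nonneg (1 + Real.cos a + Real.cos b), sq_nonneg (Real.sin a + Real.sin b)]

lemma cS_real_lower (z : ℂ) (a b : ℝ) :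
    Metric.infDist z ((fun c : ℝ => (c : ℂ)) '' Set.Icc (0 : ℝ) 9) ≤ ‖cS z a b‖ := by
  set t : ℝ := 6 - (2 * Real.cos a + 2 * Real.cos b + 2 * Real.cos (a - b)) with ht
  have h1 : cS z a b = z - (t : ℂ) := by
    unfold cS; rw [ht]; push_cast; ring
  rw [h1]
  have : ((t : ℝ) : ℂ) ∈ (fun c : ℝ => (c : ℂ)) '' Set.Icc (0 : ℝ) 9 :=
    ⟨t, f_mem a b, rfl⟩
  calc Metric.infDist z _ ≤ dist z ((t : ℝ) : ℂ) := Metric.infDist_le_dist_of_mem this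
    _ = ‖z - (t : ℂ)‖ := by rw [dist_eq_norm]

lemma cS_strip_lower (z : ℂ) (δ η : ℝ) (hδ : ∀ a b : ℝ, δ ≤ ‖cS z a b‖)
    (hη : 0 < η) (hmain : 6 * (Real.exp (2 * η) - 1) ≤ δ / 2)
    (a b c d : ℝ) (h1 : |b| ≤ η) (h2 : |d| ≤ η) :
    δ / 2 ≤ ‖cS z ((a : ℂ) + (b : ℂ) * I) ((c : ℂ) + (d : ℂ) * I)‖ := by
  set w₁ : ℂ := (a : ℂ) + (b : ℂ) * I with hw₁
  set w₂ : ℂ := (c : ℂ) + (d : ℂ) * I with hw₂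
  have key : ‖cS z w₁ w₂ - cS z a c‖ ≤ 6 * (Real.exp (2 * η) - 1) := by
    have hE : cS z w₁ w₂ - cS z (a : ℂ) (c : ℂ) =
        2 * (Complex.cos w₁ - Complex.cos (a : ℂ)) +
        2 * (Complex.cos w₂ - Complex.cos (c : ℂ)) +
        2 * (Complex.cos (w₁ - w₂) - Complex.cos ((a : ℂ) - (c : ℂ))) := by
      unfold cS; ring
    rw [hE]
    have b1 : ‖Complex.cos w₁ - Complex.cos (a : ℂ)‖ ≤ Real.exp |b| - 1 :=
      norm_cos_shift a b
    have b2 : ‖Complex.cos w₂ - Complex.cos (c : ℂ)‖ ≤ Real.exp |d| - 1 :=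
      norm_cos_shift c d
    have b3 : ‖Complex.cos (w₁ - w₂) - Complex.cos ((a : ℂ) - (c : ℂ))‖
        ≤ Real.exp |b - d| - 1 := by
      have : w₁ - w₂ = ((a - c : ℝ) : ℂ) + ((b - d : ℝ) : ℂ) * I := by
        rw [hw₁, hw₂]; push_cast; ring
      rw [this, show ((a : ℂ) - (c : ℂ)) = ((a - c : ℝ) : ℂ) by push_cast; ring]
      exact norm_cos_shift (a - c) (b - d)
    have m1 : Real.exp |b| - 1 ≤ Real.exp (2 * η) - 1 := by
      have h : |b| ≤ 2 * η := by linarith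
      have := Real.exp_le_exp.mpr h; linarith
    have m2 : Real.exp |d| - 1 ≤ Real.exp (2 * η) - 1 := by
      have h : |d| ≤ 2 * η := by linarith
      have := Real.exp_le_exp.mpr h; linarith
    have m3 : Real.exp |b - d| - 1 ≤ Real.exp (2 * η) - 1 := by
      have h : |b - d| ≤ 2 * η := by
        calc |b - d| ≤ |b| + |d| := abs_sub _ _
          _ ≤ 2 * η := by linarith
      have := Real.exp_le_exp.mpr h; linarith
    calc ‖2 * (Complex.cos w₁ - Complex.cos (a : ℂ)) +
        2 * (Complex.cos w₂ - Complex.cos (c : ℂ)) +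
        2 * (Complex.cos (w₁ - w₂) - Complex.cos ((a : ℂ) - (c : ℂ)))‖
        ≤ ‖2 * (Complex.cos w₁ - Complex.cos (a : ℂ)) +
          2 * (Complex.cos w₂ - Complex.cos (c : ℂ))‖ +
          ‖2 * (Complex.cos (w₁ - w₂) - Complex.cos ((a : ℂ) - (c : ℂ)))‖ :=
          norm_add_le _ _
      _ ≤ ‖2 * (Complex.cos w₁ - Complex.cos (a : ℂ))‖ +
          ‖2 * (Complex.cos w₂ - Complex.cos (c : ℂ))‖ +
          ‖2 * (Complex.cos (w₁ - w₂) - Complex.cos ((a : ℂ) - (c : ℂ)))‖ := by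
          gcongr; exact norm_add_le _ _
      _ ≤ 6 * (Real.exp (2 * η) - 1) := by
          rw [norm_mul, norm_mul, norm_mul]
          simp only [Complex.norm_ofNat]
          nlinarith [norm_nonneg (Complex.cos w₁ - Complex.cos (a : ℂ))]
  have hlow := hδ a c
  have hrev : ‖cS z (a : ℂ) (c : ℂ)‖ - ‖cS z w₁ w₂‖ ≤ 6 * (Real.exp (2 * η) - 1) := by
    have h := norm_sub_norm_le (cS z (a : ℂ) (c : ℂ)) (cS z w₁ w₂)
    have h2 : ‖cS z (a : ℂ) (c : ℂ) - cS z w₁ w₂‖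
        = ‖cS z w₁ w₂ - cS z (a : ℂ) (c : ℂ)‖ := norm_sub_rev _ _
    linarith
  linarith

lemma contour_shift (g : ℂ → ℂ) (b : ℝ)
    (hd : DifferentiableOn ℂ g {w : ℂ | |w.im| ≤ |b|})
    (hper : ∀ w : ℂ, g (w + 2 * Real.pi) = g w) :
    ∫ t in (-Real.pi : ℝ)..Real.pi, g t
      = ∫ t in (-Real.pi : ℝ)..Real.pi, g ((t : ℂ) + (b : ℂ) * I) := by
  set z₀ : ℂ := ((-Real.pi : ℝ) : ℂ) with hz₀
  set w₀ : ℂ := ((Real.pi : ℝ) : ℂ) + (b : ℂ) * I with hw₀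
  have hre₀ : z₀.re = -Real.pi := by simp [hz₀]
  have him₀ : z₀.im = 0 := by simp [hz₀]
  have hre₁ : w₀.re = Real.pi := by simp [hw₀]
  have him₁ : w₀.im = b := by simp [hw₀]
  have hsub : ([[z₀.re, w₀.re]] ×ℂ [[z₀.im, w₀.im]]) ⊆ {w : ℂ | |w.im| ≤ |b|} := by
    rintro w ⟨-, hw2⟩
    simp only [Set.mem_preimage, him₀, him₁] at hw2
    simp only [Set.mem_setOf_eq]
    rcases le_total 0 b with hb | hb
    · rw [Set.uIcc_of_le hb] at hw2
      rw [_root_.abs_of_nonneg hb]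
      exact abs_le.mpr ⟨by linarith [hw2.1], hw2.2⟩
    · rw [Set.uIcc_of_ge hb] at hw2
      rw [_root_.abs_of_nonpos hb]
      exact abs_le.mpr ⟨by linarith [hw2.1], by linarith [hw2.2]⟩
  have H := Complex.integral_boundary_rect_eq_zero_of_differentiableOn g z₀ w₀ (hd.mono hsub)
  rw [hre₀, him₀, hre₁, him₁] at H
  have hside : (∫ y in (0:ℝ)..b, g ((Real.pi : ℂ) + y * I))
      = ∫ y in (0:ℝ)..b, g (((-Real.pi : ℝ) : ℂ) + y * I) := by
    apply intervalIntegral.integral_congr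
    intro y _
    show g ((Real.pi : ℂ) + (y : ℂ) * I) = g (((-Real.pi : ℝ) : ℂ) + (y : ℂ) * I)
    rw [show ((Real.pi : ℂ)) + (y:ℂ) * I
        = (((-Real.pi : ℝ) : ℂ) + (y:ℂ) * I) + 2 * Real.pi by push_cast; ring]
    rw [hper]
  have h0 : (∫ x in (-Real.pi : ℝ)..Real.pi, g ((x : ℂ) + ((0:ℝ):ℂ) * I))
      = ∫ x in (-Real.pi : ℝ)..Real.pi, g x := by
    apply intervalIntegral.integral_congr
    intro x _
    norm_num
  rw [hside] at H
  rw [← h0]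
  simp only [smul_eq_mul] at H
  linear_combination H

/-- Complexified integrand. -/
noncomputable def cH (z : ℂ) (m n : ℤ) (w₁ w₂ : ℂ) : ℂ :=
  Complex.exp (I * ((m : ℂ) * w₁ + (n : ℂ) * w₂)) / cS z w₁ w₂

lemma cS_per₂ (z : ℂ) (w₁ w₂ : ℂ) : cS z w₁ (w₂ + 2 * Real.pi) = cS z w₁ w₂ := by
  unfold cS
  rw [Complex.cos_add_two_pi, show w₁ - (w₂ + 2 * (Real.pi : ℂ)) = (w₁ - w₂) - 2 * Real.pi by ring,
    Complex.cos_sub_two_pi]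

lemma cS_per₁ (z : ℂ) (w₁ w₂ : ℂ) : cS z (w₁ + 2 * Real.pi) w₂ = cS z w₁ w₂ := by
  unfold cS
  rw [Complex.cos_add_two_pi, show (w₁ + 2 * (Real.pi : ℂ)) - w₂ = (w₁ - w₂) + 2 * Real.pi by ring,
    Complex.cos_add_two_pi]

lemma cH_per₂ (z : ℂ) (m n : ℤ) (w₁ w₂ : ℂ) :
    cH z m n w₁ (w₂ + 2 * Real.pi) = cH z m n w₁ w₂ := by
  unfold cH
  rw [cS_per₂, show I * ((m : ℂ) * w₁ + (n : ℂ) * (w₂ + 2 * Real.pi))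
      = I * ((m : ℂ) * w₁ + (n : ℂ) * w₂) + (n : ℂ) * (2 * Real.pi * I) by ring,
    Complex.exp_add, Complex.exp_int_mul_two_pi_mul_I, mul_one]

lemma cH_per₁ (z : ℂ) (m n : ℤ) (w₁ w₂ : ℂ) :
    cH z m n (w₁ + 2 * Real.pi) w₂ = cH z m n w₁ w₂ := by
  unfold cH
  rw [cS_per₁, show I * ((m : ℂ) * (w₁ + 2 * Real.pi) + (n : ℂ) * w₂)
      = I * ((m : ℂ) * w₁ + (n : ℂ) * w₂) + (m : ℂ) * (2 * Real.pi * I) by ring,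
    Complex.exp_add, Complex.exp_int_mul_two_pi_mul_I, mul_one]

lemma icc_eq_interval (f : ℝ → ℂ) :
    ∫ t in Set.Icc (-Real.pi) Real.pi, f t = ∫ t in (-Real.pi : ℝ)..Real.pi, f t := by
  rw [intervalIntegral.integral_of_le (by linarith [Real.pi_pos] : -Real.pi ≤ Real.pi),
    MeasureTheory.integral_Icc_eq_integral_Ioc]

lemma int_mul_sign_real (n : ℤ) : (n : ℝ) * (n.sign : ℝ) = ((|n| : ℤ) : ℝ) := by
  have : n * n.sign = |n| := by
    rcases lt_trichotomy n 0 with h | h | h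
    · rw [Int.sign_eq_neg_one_of_neg h, abs_of_neg h]; ring
    · simp [h]
    · rw [Int.sign_eq_one_of_pos h, abs_of_pos h]; ring
  calc (n : ℝ) * (n.sign : ℝ) = ((n * n.sign : ℤ) : ℝ) := by push_cast; ring
    _ = ((|n| : ℤ) : ℝ) := by rw [this]

end Aux

theorem latticeGreen_exponential_decay (z : ℂ)
    (hz : z ∉ (fun c : ℝ => (c : ℂ)) '' Set.Icc (0 : ℝ) 9) :
    ∃ C > (0 : ℝ), ∃ c > (0 : ℝ), ∀ x : ℤ × ℤ,
      ‖latticeGreen z x‖ ≤ C * Real.exp (-c * ((|x.1| : ℤ) + (|x.2| : ℤ) : ℝ)) := by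
  classical
  open Complex Set in
  set T : Set ℂ := (fun c : ℝ => (c : ℂ)) '' Set.Icc (0 : ℝ) 9 with hT
  have hTne : T.Nonempty := ⟨(0 : ℂ), 0, by norm_num, by norm_num⟩
  have hTclosed : IsClosed T :=
    (isCompact_Icc.image (Complex.continuous_ofReal)).isClosed
  set δ : ℝ := Metric.infDist z T with hδdef
  have hδpos : 0 < δ := (hTclosed.notMem_iff_infDist_pos hTne).1 hz
  have hδ : ∀ a b : ℝ, δ ≤ ‖cS z a b‖ := fun a b => cS_real_lower z a b
  set η : ℝ := Real.log (1 + δ / 12) / 2 with hηdef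
  have hηpos : 0 < η := by
    have : 0 < Real.log (1 + δ / 12) := Real.log_pos (by linarith)
    positivity
  have hmain : 6 * (Real.exp (2 * η) - 1) ≤ δ / 2 := by
    rw [hηdef, show 2 * (Real.log (1 + δ / 12) / 2) = Real.log (1 + δ / 12) by ring,
      Real.exp_log (by linarith)]
    linarith
  -- nonvanishing on the strip
  have hlow : ∀ w₁ w₂ : ℂ, |w₁.im| ≤ η → |w₂.im| ≤ η → δ / 2 ≤ ‖cS z w₁ w₂‖ := by
    intro w₁ w₂ h1 h2
    have := cS_strip_lower z δ η hδ hηpos hmain w₁.re w₁.im w₂.re w₂.im h1 h2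
    rwa [Complex.re_add_im, Complex.re_add_im] at this
  have hne : ∀ w₁ w₂ : ℂ, |w₁.im| ≤ η → |w₂.im| ≤ η → cS z w₁ w₂ ≠ 0 := by
    intro w₁ w₂ h1 h2 h0
    have := hlow w₁ w₂ h1 h2
    rw [h0, norm_zero] at this
    linarith
  refine ⟨2 / δ, by positivity, η, hηpos, ?_⟩
  clear_value δ η
  rintro ⟨m, n⟩
  set A : Set ℝ := Set.Icc (-Real.pi) Real.pi with hA
  set b₁ : ℝ := η * (m.sign : ℝ) with hb₁def
  set b₂ : ℝ := η * (n.sign : ℝ) with hb₂def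
  have habs_sign : ∀ k : ℤ, |(k.sign : ℝ)| ≤ 1 := by
    intro k
    rcases lt_trichotomy k 0 with h | h | h <;>
      simp [Int.sign_eq_neg_one_of_neg, Int.sign_eq_one_of_pos, h]
  have hb₁ : |b₁| ≤ η := by
    rw [hb₁def, abs_mul, abs_of_pos hηpos]
    nlinarith [habs_sign m, abs_nonneg ((m.sign : ℝ))]
  have hb₂ : |b₂| ≤ η := by
    rw [hb₂def, abs_mul, abs_of_pos hηpos]
    nlinarith [habs_sign n, abs_nonneg ((n.sign : ℝ))]
  have hx₁ : (m : ℝ) * b₁ = η * ((|m| : ℤ) : ℝ) := by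
    rw [hb₁def, ← int_mul_sign_real m]; ring
  have hx₂ : (n : ℝ) * b₂ = η * ((|n| : ℤ) : ℝ) := by
    rw [hb₂def, ← int_mul_sign_real n]; ring
  clear_value b₁ b₂
  -- continuity and integrability of shifted integrands
  have hcontH : ∀ c₁ c₂ : ℝ, |c₁| ≤ η → |c₂| ≤ η →
      Continuous (fun p : ℝ × ℝ =>
        cH z m n ((p.1 : ℂ) + (c₁ : ℂ) * Complex.I) ((p.2 : ℂ) + (c₂ : ℂ) * Complex.I)) := by
    intro c₁ c₂ h1 h2
    unfold cH
    apply Continuous.div (by fun_prop) (by unfold cS; fun_prop)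
    intro p
    apply hne <;> simp [h1, h2]
  have hIntH : ∀ c₁ c₂ : ℝ, |c₁| ≤ η → |c₂| ≤ η →
      IntegrableOn (fun p : ℝ × ℝ =>
        cH z m n ((p.1 : ℂ) + (c₁ : ℂ) * Complex.I) ((p.2 : ℂ) + (c₂ : ℂ) * Complex.I))
        (A ×ˢ A) := by
    intro c₁ c₂ h1 h2
    exact ((hcontH c₁ c₂ h1 h2).continuousOn).integrableOn_compact
      (isCompact_Icc.prod isCompact_Icc)
  -- contour shifts
  have shift₂ : ∀ a : ℝ, (∫ t in A, cH z m n (a : ℂ) (t : ℂ))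
      = ∫ t in A, cH z m n (a : ℂ) ((t : ℂ) + (b₂ : ℂ) * Complex.I) := by
    intro a
    rw [hA, icc_eq_interval, icc_eq_interval]
    apply contour_shift (fun w => cH z m n (a : ℂ) w) b₂
    · unfold cH
      apply DifferentiableOn.div
      · exact (Differentiable.differentiableOn (by fun_prop))
      · exact (Differentiable.differentiableOn (by unfold cS; fun_prop))
      · intro w hw
        apply hne
        · simp [hηpos.le]
        · exact le_trans hw hb₂
    · intro w; exact cH_per₂ z m n _ w
  have shift₁ : ∀ t : ℝ, (∫ s in A, cH z m n (s : ℂ) ((t : ℂ) + (b₂ : ℂ) * Complex.I))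
      = ∫ s in A, cH z m n ((s : ℂ) + (b₁ : ℂ) * Complex.I)
          ((t : ℂ) + (b₂ : ℂ) * Complex.I) := by
    intro t
    rw [hA, icc_eq_interval, icc_eq_interval]
    apply contour_shift (fun w => cH z m n w ((t : ℂ) + (b₂ : ℂ) * Complex.I)) b₁
    · unfold cH
      apply DifferentiableOn.div
      · exact (Differentiable.differentiableOn (by fun_prop))
      · exact (Differentiable.differentiableOn (by unfold cS; fun_prop))
      · intro w hw
        apply hne
        · exact le_trans hw hb₁
        · simp [hb₂]
    · intro w; exact cH_per₁ z m n w _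
  -- Fubini
  have fub : (∫ a in A, ∫ t in A, cH z m n (a : ℂ) ((t : ℂ) + (b₂ : ℂ) * Complex.I))
      = ∫ t in A, ∫ a in A, cH z m n (a : ℂ) ((t : ℂ) + (b₂ : ℂ) * Complex.I) := by
    apply MeasureTheory.integral_integral_swap
    rw [Measure.prod_restrict]
    have h0 : |(0 : ℝ)| ≤ η := by simpa using hηpos.le
    have := hIntH 0 b₂ h0 hb₂
    simp only [Complex.ofReal_zero, zero_mul, add_zero] at this
    rw [IntegrableOn, Measure.volume_eq_prod] at this
    exact this
  -- pointwise bound on the doubly shifted integrand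
  set K : ℝ := 2 / δ * Real.exp (-η * (((|m| : ℤ) : ℝ) + ((|n| : ℤ) : ℝ))) with hK
  have hKpos : 0 < K := by positivity
  have hpt : ∀ s t : ℝ,
      ‖cH z m n ((s : ℂ) + (b₁ : ℂ) * Complex.I) ((t : ℂ) + (b₂ : ℂ) * Complex.I)‖ ≤ K := by
    intro s t
    unfold cH
    rw [norm_div]
    have hnum : ‖Complex.exp (Complex.I * ((m : ℂ) * ((s : ℂ) + (b₁ : ℂ) * Complex.I)
        + (n : ℂ) * ((t : ℂ) + (b₂ : ℂ) * Complex.I)))‖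
        = Real.exp (-((m : ℝ) * b₁ + (n : ℝ) * b₂)) := by
      rw [show Complex.I * ((m : ℂ) * ((s : ℂ) + (b₁ : ℂ) * Complex.I)
          + (n : ℂ) * ((t : ℂ) + (b₂ : ℂ) * Complex.I))
          = ((-((m : ℝ) * b₁ + (n : ℝ) * b₂) : ℝ) : ℂ)
            + (((m : ℝ) * s + (n : ℝ) * t : ℝ) : ℂ) * Complex.I by
          push_cast
          linear_combination ((m : ℂ) * (b₁ : ℂ) + (n : ℂ) * (b₂ : ℂ)) * Complex.I_sq]
      rw [Complex.norm_exp]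
      congr 1
      simp
    have him1 : |((s : ℂ) + (b₁ : ℂ) * Complex.I).im| ≤ η := by simpa using hb₁
    have him2 : |((t : ℂ) + (b₂ : ℂ) * Complex.I).im| ≤ η := by simpa using hb₂
    have hden := hlow _ _ him1 him2
    rw [hnum]
    have hexp : -((m : ℝ) * b₁ + (n : ℝ) * b₂)
        = -η * (((|m| : ℤ) : ℝ) + ((|n| : ℤ) : ℝ)) := by
      rw [hx₁, hx₂]; ring
    calc Real.exp (-((m : ℝ) * b₁ + (n : ℝ) * b₂)) / ‖cS z _ _‖
        ≤ Real.exp (-((m : ℝ) * b₁ + (n : ℝ) * b₂)) / (δ / 2) := by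
          apply div_le_div_of_nonneg_left (Real.exp_nonneg _) (by linarith) hden
      _ = K := by rw [hexp, hK]; field_simp
  -- volume facts
  have hAfin : volume A < ⊤ := by rw [hA]; exact measure_Icc_lt_top
  have hAr : (volume A).toReal = 2 * Real.pi := by
    rw [hA, Real.volume_Icc, ENNReal.toReal_ofReal (by linarith [Real.pi_pos])]
    ring
  have hinner : ∀ t : ℝ,
      ‖∫ s in A, cH z m n ((s : ℂ) + (b₁ : ℂ) * Complex.I)
        ((t : ℂ) + (b₂ : ℂ) * Complex.I)‖ ≤ K * (2 * Real.pi) := by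
    intro t
    have := norm_setIntegral_le_of_norm_le_const hAfin
      (fun s _ => hpt s t)
    rwa [measureReal_def, hAr] at this
  have houter : ‖∫ t in A, ∫ s in A, cH z m n ((s : ℂ) + (b₁ : ℂ) * Complex.I)
      ((t : ℂ) + (b₂ : ℂ) * Complex.I)‖ ≤ K * (2 * Real.pi) * (2 * Real.pi) := by
    have := norm_setIntegral_le_of_norm_le_const hAfin
      (fun t (_ : t ∈ A) => hinner t)
    rwa [measureReal_def, hAr] at this
  -- the chain of equalities
  have hfun : ∀ ξ : ℝ × ℝ,
      Complex.exp (Complex.I * ((m : ℂ) * (ξ.1 : ℂ) + (n : ℂ) * (ξ.2 : ℂ))) / latticeSymbol ξ z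
      = cH z m n (ξ.1 : ℂ) (ξ.2 : ℂ) := by
    intro ξ
    unfold cH
    rw [cS_real z ξ.1 ξ.2]
  have hIntReal : IntegrableOn (fun ξ : ℝ × ℝ => cH z m n (ξ.1 : ℂ) (ξ.2 : ℂ)) (A ×ˢ A)
      (volume.prod volume) := by
    have h0 : |(0 : ℝ)| ≤ η := by simpa using hηpos.le
    have := hIntH 0 0 h0 h0
    simp only [Complex.ofReal_zero, zero_mul, add_zero] at this
    rw [IntegrableOn, Measure.volume_eq_prod] at this
    exact this
  have chain : (∫ ξ in A ×ˢ A,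
      Complex.exp (Complex.I * ((m : ℂ) * (ξ.1 : ℂ) + (n : ℂ) * (ξ.2 : ℂ))) / latticeSymbol ξ z)
      = ∫ t in A, ∫ s in A, cH z m n ((s : ℂ) + (b₁ : ℂ) * Complex.I)
          ((t : ℂ) + (b₂ : ℂ) * Complex.I) := by
    calc (∫ ξ in A ×ˢ A,
        Complex.exp (Complex.I * ((m : ℂ) * (ξ.1 : ℂ) + (n : ℂ) * (ξ.2 : ℂ))) / latticeSymbol ξ z)
        = ∫ ξ in A ×ˢ A, cH z m n (ξ.1 : ℂ) (ξ.2 : ℂ) :=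
          MeasureTheory.integral_congr_ae (Filter.Eventually.of_forall (fun ξ => hfun ξ))
      _ = ∫ a in A, ∫ t in A, cH z m n (a : ℂ) (t : ℂ) := by
          have := MeasureTheory.setIntegral_prod (μ := volume) (ν := volume)
            (fun ξ : ℝ × ℝ => cH z m n (ξ.1 : ℂ) (ξ.2 : ℂ)) hIntReal
          rw [← Measure.volume_eq_prod] at this
          exact this
      _ = ∫ a in A, ∫ t in A, cH z m n (a : ℂ) ((t : ℂ) + (b₂ : ℂ) * Complex.I) := by
          simp only [shift₂]
      _ = ∫ t in A, ∫ a in A, cH z m n (a : ℂ) ((t : ℂ) + (b₂ : ℂ) * Complex.I) := fub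
      _ = ∫ t in A, ∫ s in A, cH z m n ((s : ℂ) + (b₁ : ℂ) * Complex.I)
            ((t : ℂ) + (b₂ : ℂ) * Complex.I) := by simp only [shift₁]
  -- conclude
  have hnormpref : ‖(1 / (4 * (Real.pi : ℂ) ^ 2) : ℂ)‖ = 1 / (4 * Real.pi ^ 2) := by
    rw [show (4 * (Real.pi : ℂ) ^ 2 : ℂ) = ((4 * Real.pi ^ 2 : ℝ) : ℂ) by push_cast; ring]
    rw [norm_div, norm_one, Complex.norm_real, Real.norm_eq_abs,
      abs_of_pos (by positivity)]
  rw [latticeGreen]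
  simp only []
  rw [norm_mul, hnormpref, chain]
  have hπ : (0 : ℝ) < Real.pi := Real.pi_pos
  calc 1 / (4 * Real.pi ^ 2) * ‖∫ t in A, ∫ s in A, cH z m n ((s : ℂ) + (b₁ : ℂ) * Complex.I)
        ((t : ℂ) + (b₂ : ℂ) * Complex.I)‖
      ≤ 1 / (4 * Real.pi ^ 2) * (K * (2 * Real.pi) * (2 * Real.pi)) := by
        apply mul_le_mul_of_nonneg_left houter (by positivity)
    _ = K := by field_simp; ring
    _ = 2 / δ * Real.exp (-η * ((|m| : ℤ) + (|n| : ℤ) : ℝ)) := by rw [hK]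
end

section
/- Let z ∈ ℂ with Im z ≠ 0. Then the quadratic equation 2λ² + (z − 4)λ + 2 = 0 has exactly one root λ ∈ ℂ with |λ| < 1, and its other root has modulus strictly greater than 1. -/
open Complex

private lemma root_ne_zero' {z lam : ℂ} (h : 2 * lam ^ 2 + (z - 4) * lam + 2 = 0) :
    lam ≠ 0 := by
  rintro rfl
  simp at h

private lemma root_norm_ne_one' {z lam : ℂ} (hz : z.im ≠ 0)
    (h : 2 * lam ^ 2 + (z - 4) * lam + 2 = 0) : ‖lam‖ ≠ 1 := by
  intro hn
  have h0 : lam ≠ 0 := root_ne_zero' h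
  have hmul : lam * (starRingEnd ℂ) lam = 1 := by
    rw [Complex.mul_conj]
    norm_cast
    rw [Complex.normSq_eq_norm_sq]
    simp [hn]
  have hinv : (starRingEnd ℂ) lam = lam⁻¹ := eq_inv_of_mul_eq_one_right hmul
  have hzval : z = 4 - 2 * lam - 2 * (starRingEnd ℂ) lam := by
    rw [hinv]
    field_simp
    linear_combination h
  have : z.im = 0 := by
    rw [hzval]
    simp [Complex.sub_im, Complex.mul_im, Complex.conj_im]
  exact hz this

private lemma root_inv {z lam : ℂ} (h : 2 * lam ^ 2 + (z - 4) * lam + 2 = 0) :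
    2 * lam⁻¹ ^ 2 + (z - 4) * lam⁻¹ + 2 = 0 := by
  have h0 : lam ≠ 0 := root_ne_zero' h
  field_simp
  linear_combination h

private lemma root_factor {z l1 l2 : ℂ}
    (h1 : 2 * l1 ^ 2 + (z - 4) * l1 + 2 = 0)
    (h2 : 2 * l2 ^ 2 + (z - 4) * l2 + 2 = 0) :
    (l2 - l1) * (l1 * l2 - 1) = 0 := by
  linear_combination (l1 * h2 - l2 * h1) / 2

private lemma exists_root (z : ℂ) : ∃ lam : ℂ, 2 * lam ^ 2 + (z - 4) * lam + 2 = 0 := by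
  obtain ⟨s, hs⟩ := IsAlgClosed.exists_pow_nat_eq (discrim 2 (z - 4) 2) (n := 2) (by norm_num)
  have hs' : discrim 2 (z - 4) 2 = s * s := by rw [← hs]; ring
  refine ⟨(-(z - 4) + s) / (2 * 2), ?_⟩
  have := (quadratic_eq_zero_iff (by norm_num : (2:ℂ) ≠ 0) hs'
    ((-(z - 4) + s) / (2 * 2))).mpr (Or.inl rfl)
  linear_combination this

theorem quadratic_unique_root_in_unit_disc (z : ℂ) (hz : z.im ≠ 0) :
    (∃! lam : ℂ, 2 * lam ^ 2 + (z - 4) * lam + 2 = 0 ∧ ‖lam‖ < 1) ∧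
    (∀ lam : ℂ, 2 * lam ^ 2 + (z - 4) * lam + 2 = 0 → ‖lam‖ < 1 ∨ 1 < ‖lam‖) := by
  have tri : ∀ lam : ℂ, 2 * lam ^ 2 + (z - 4) * lam + 2 = 0 → ‖lam‖ < 1 ∨ 1 < ‖lam‖ := by
    intro lam h
    rcases lt_trichotomy ‖lam‖ 1 with h' | h' | h'
    · exact Or.inl h'
    · exact absurd h' (root_norm_ne_one' hz h)
    · exact Or.inr h'
  refine ⟨?_, tri⟩
  obtain ⟨l0, hl0⟩ := exists_root z
  have h00 : l0 ≠ 0 := root_ne_zero' hl0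
  have hinvnorm : ‖l0⁻¹‖ = ‖l0‖⁻¹ := norm_inv l0
  -- pick the root inside the disc
  obtain ⟨l, hl, hln⟩ : ∃ l : ℂ, (2 * l ^ 2 + (z - 4) * l + 2 = 0) ∧ ‖l‖ < 1 := by
    rcases tri l0 hl0 with h' | h'
    · exact ⟨l0, hl0, h'⟩
    · refine ⟨l0⁻¹, root_inv hl0, ?_⟩
      rw [hinvnorm]
      rw [inv_lt_one_iff₀]
      exact Or.inr h'
  refine ⟨l, ⟨hl, hln⟩, ?_⟩
  rintro l' ⟨hl', hln'⟩
  have h0 : l ≠ 0 := root_ne_zero' hl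
  rcases mul_eq_zero.mp (root_factor hl hl') with h | h
  · exact sub_eq_zero.mp h
  · exfalso
    have hll' : l * l' = 1 := sub_eq_zero.mp h
    have : ‖l‖ * ‖l'‖ = 1 := by rw [← norm_mul, hll']; simp
    nlinarith [norm_nonneg l, norm_nonneg l']
end
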